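/- Under the same hypotheses (ρ ≥ 0 in L¹(ℝ²), mass M, supp ρ ⊂ B(0,r₀), zero center of mass, u = K∗ρ with K(x) = -(1/2π)log|x|), there exists C₂ > 0 such that |∇(u(x) - M·K(x))| ≤ C₂ r₀² |x|^{-3} for all |x| ≥ 2r₀. -/

import Mathlib

open MeasureTheory Real

abbrev E2 : Type := EuclideanSpace ℝ (Fin 2)

/-!
Differentiating under the integral sign (legitimate because `x` stays at distance `≥ r₀` from
the support of `ρ`), the derivative of `u - M K` at `x` is represented by
`∫ ρ(y) (∇K(x - y) - ∇K(x)) dy`. As `ρ` has zero first moment, the linear Taylor term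
`D²K(x) y` may be added to the integrand for free, and what remains is the second-order Taylor
remainder of `∇K(z) = -z / (2π |z|²)`, which is `O(|y|² / |x|³)` for `|y| ≤ |x| / 2`.
-/

open RealInnerProductSpace

theorem MeasureTheory.Integrable.smul_of_norm_le_of_ne_zero {α F : Type*} [MeasurableSpace α]
    {μ : Measure α} [NormedAddCommGroup F] [NormedSpace ℝ F] {ρ : α → ℝ} {f : α → F} {C : ℝ}
    (hρ : Integrable ρ μ) (hf : AEStronglyMeasurable f μ) (hbound : ∀ y, ρ y ≠ 0 → ‖f y‖ ≤ C) :
    Integrable (fun y => ρ y • f y) μ := by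
  refine (hρ.norm.const_mul C).mono' (hρ.aestronglyMeasurable.smul hf) (ae_of_all _ fun y => ?_)
  rw [norm_smul, mul_comm]
  rcases eq_or_ne (ρ y) 0 with hy | hy
  · simp [hy]
  · exact mul_le_mul_of_nonneg_right (hbound y hy) (norm_nonneg _)

section LogKernel

variable {E : Type*} [NormedAddCommGroup E]

noncomputable def logKernel (z : E) : ℝ := -(1 / (2 * π)) * Real.log ‖z‖

noncomputable def logPotential [MeasurableSpace E] (μ : Measure E) (ρ : E → ℝ) (x : E) : ℝ :=
  ∫ y, logKernel (x - y) * ρ y ∂μ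

theorem measurable_logKernel [MeasurableSpace E] [BorelSpace E] :
    Measurable (logKernel : E → ℝ) := by
  unfold logKernel; fun_prop

theorem integrable_logKernel_sub_mul [MeasurableSpace E] [BorelSpace E] {μ : Measure E}
    {ρ : E → ℝ} {x : E} {a b : ℝ} (hρ : Integrable ρ μ) (ha : 0 < a)
    (hsupp : ∀ y, ρ y ≠ 0 → a ≤ ‖x - y‖ ∧ ‖x - y‖ ≤ b) :
    Integrable (fun y => logKernel (x - y) * ρ y) μ := by
  have hmeas : AEStronglyMeasurable (fun y => logKernel (x - y)) μ :=
    (measurable_logKernel.comp (continuous_sub_left x).measurable).aestronglyMeasurable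
  refine (hρ.smul_of_norm_le_of_ne_zero hmeas
    (C := 1 / (2 * π) * max |Real.log a| |Real.log b|) fun y hy => ?_).congr
    (ae_of_all _ fun y => mul_comm _ _)
  obtain ⟨hay, hyb⟩ := hsupp y hy
  rw [logKernel, norm_mul, norm_neg, Real.norm_of_nonneg (by positivity), Real.norm_eq_abs]
  gcongr
  exact abs_le_max_abs_abs (Real.log_le_log ha hay) (Real.log_le_log (by linarith) hyb)

variable [InnerProductSpace ℝ E]

noncomputable def logKernelGrad (z : E) : E := (-(1 / (2 * π)) / ‖z‖ ^ 2) • z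

noncomputable def logKernelHess (x : E) : E →L[ℝ] E :=
  (-(1 / (2 * π)) / ‖x‖ ^ 2) • ContinuousLinearMap.id ℝ E +
    (2 * (1 / (2 * π)) / ‖x‖ ^ 4) • (innerSL ℝ x).smulRight x

theorem hasFDerivAt_logKernel {z : E} (hz : z ≠ 0) :
    HasFDerivAt logKernel (innerSL ℝ (logKernelGrad z)) z := by
  have hz2 : ‖z‖ ^ 2 ≠ 0 := by positivity
  have h := (((hasStrictFDerivAt_norm_sq z).hasFDerivAt).log hz2).const_mul (-(1 / (2 * π)) / 2)
  have hfun : (fun w : E => -(1 / (2 * π)) / 2 * Real.log (‖w‖ ^ 2)) = logKernel := by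
    funext w
    rw [logKernel, Real.log_pow]
    push_cast
    ring
  rw [hfun] at h
  refine h.congr_fderiv ?_
  ext w
  simp only [logKernelGrad, smul_apply, innerSL_apply_apply, smul_eq_mul, nsmul_eq_mul,
    real_inner_smul_left]
  push_cast
  field_simp

theorem norm_logKernelGrad (z : E) : ‖logKernelGrad z‖ = 1 / (2 * π) / ‖z‖ := by
  rcases eq_or_ne z 0 with rfl | hz
  · simp [logKernelGrad]
  have : 0 < ‖z‖ := norm_pos_iff.2 hz
  rw [logKernelGrad, norm_smul, norm_div, norm_neg, norm_pow, norm_norm,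
    Real.norm_of_nonneg (by positivity)]
  field_simp

theorem norm_logKernelGrad_le {z : E} {δ : ℝ} (hδ : 0 < δ) (hz : δ ≤ ‖z‖) :
    ‖logKernelGrad z‖ ≤ 1 / (2 * π) / δ := by
  rw [norm_logKernelGrad]
  exact div_le_div_of_nonneg_left (by positivity) hδ hz

theorem measurable_logKernelGrad [MeasurableSpace E] [BorelSpace E] [SecondCountableTopology E] :
    Measurable (logKernelGrad : E → E) := by
  unfold logKernelGrad; fun_prop

theorem logKernelGrad_sub_sub_add_logKernelHess {x y : E} (hx : x ≠ 0) (hxy : x - y ≠ 0) :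
    logKernelGrad (x - y) - logKernelGrad x + logKernelHess x y =
      (-(1 / (2 * π)) / (‖x‖ ^ 4 * ‖x - y‖ ^ 2)) •
        ((2 * ⟪x, y⟫ * (2 * ⟪x, y⟫ - ‖y‖ ^ 2) - ‖x‖ ^ 2 * ‖y‖ ^ 2) • x
          - (‖x‖ ^ 2 * (2 * ⟪x, y⟫ - ‖y‖ ^ 2)) • y) := by
  have hx' : ‖x‖ ≠ 0 := norm_ne_zero_iff.2 hx
  have hxy' : ‖x - y‖ ^ 2 ≠ 0 := by positivity
  rw [norm_sub_sq_real] at hxy' ⊢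
  simp only [logKernelGrad, logKernelHess, add_apply, smul_apply, ContinuousLinearMap.id_apply,
    ContinuousLinearMap.smulRight_apply, innerSL_apply_apply, norm_sub_sq_real]
  match_scalars <;> field_simp <;> ring

theorem norm_logKernelGrad_sub_sub_add_logKernelHess_le {x y : E} (hx : x ≠ 0)
    (hy : ‖y‖ ≤ ‖x‖ / 2) :
    ‖logKernelGrad (x - y) - logKernelGrad x + logKernelHess x y‖ ≤
      20 / π * ‖y‖ ^ 2 / ‖x‖ ^ 3 := by
  have hx' : 0 < ‖x‖ := norm_pos_iff.2 hx
  have hxy : ‖x‖ / 2 ≤ ‖x - y‖ := by linarith [norm_sub_norm_le x y]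
  have hxy0 : x - y ≠ 0 := norm_pos_iff.1 (by linarith)
  rw [logKernelGrad_sub_sub_add_logKernelHess hx hxy0, norm_smul]
  set a := ‖x‖
  set b := ‖y‖
  set p := ⟪x, y⟫
  have hb : 0 ≤ b := norm_nonneg y
  have hp : |p| ≤ a * b := abs_real_inner_le_norm x y
  have hs : |2 * p - b ^ 2| ≤ 3 * a * b := by
    rw [abs_le] at hp ⊢; constructor <;> nlinarith
  have hcoef : ‖-(1 / (2 * π)) / (a ^ 4 * ‖x - y‖ ^ 2)‖ ≤ 2 / π / a ^ 6 := by
    rw [norm_div, norm_neg, Real.norm_of_nonneg (by positivity),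
      Real.norm_of_nonneg (by positivity), div_le_div_iff₀ (by positivity) (by positivity)]
    have : a ^ 2 ≤ 4 * ‖x - y‖ ^ 2 := by nlinarith
    have := Real.pi_pos
    field_simp
    nlinarith [pow_pos hx' 4]
  have hnum : ‖(2 * p * (2 * p - b ^ 2) - a ^ 2 * b ^ 2) • x - (a ^ 2 * (2 * p - b ^ 2)) • y‖ ≤
      10 * a ^ 3 * b ^ 2 := by
    have h1 : |2 * p * (2 * p - b ^ 2) - a ^ 2 * b ^ 2| ≤ 7 * a ^ 2 * b ^ 2 := by
      calc _ ≤ 2 * |p| * |2 * p - b ^ 2| + a ^ 2 * b ^ 2 := by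
            refine (abs_sub _ _).trans_eq ?_
            rw [abs_mul, abs_mul, abs_two, abs_of_nonneg (by positivity : 0 ≤ a ^ 2 * b ^ 2)]
        _ ≤ 2 * (a * b) * (3 * a * b) + a ^ 2 * b ^ 2 := by gcongr
        _ = 7 * a ^ 2 * b ^ 2 := by ring
    calc _ ≤ |2 * p * (2 * p - b ^ 2) - a ^ 2 * b ^ 2| * a + a ^ 2 * |2 * p - b ^ 2| * b := by
          refine (norm_sub_le _ _).trans_eq ?_
          rw [norm_smul, norm_smul, Real.norm_eq_abs, Real.norm_eq_abs, abs_mul,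
            abs_of_nonneg (sq_nonneg a)]
      _ ≤ 7 * a ^ 2 * b ^ 2 * a + a ^ 2 * (3 * a * b) * b := by gcongr
      _ = 10 * a ^ 3 * b ^ 2 := by ring
  calc _ ≤ 2 / π / a ^ 6 * (10 * a ^ 3 * b ^ 2) := by gcongr
    _ = 20 / π * b ^ 2 / a ^ 3 := by field_simp; ring

end LogKernel

section LogPotential

variable {E : Type*} [NormedAddCommGroup E] [InnerProductSpace ℝ E] [MeasurableSpace E]
  {μ : Measure E}

theorem integrable_smul_logKernelGrad_sub [BorelSpace E] [SecondCountableTopology E]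
    {ρ : E → ℝ} {x : E} {δ : ℝ} (hρ : Integrable ρ μ) (hδ : 0 < δ)
    (hsupp : ∀ y, ρ y ≠ 0 → δ ≤ ‖x - y‖) :
    Integrable (fun y => ρ y • logKernelGrad (x - y)) μ :=
  hρ.smul_of_norm_le_of_ne_zero
    (measurable_logKernelGrad.comp (continuous_sub_left x).measurable).aestronglyMeasurable
    fun y hy => norm_logKernelGrad_le hδ (hsupp y hy)

theorem hasFDerivAt_logPotential [BorelSpace E] [CompleteSpace E] [SecondCountableTopology E]
    {ρ : E → ℝ} {x : E} {δ : ℝ} (hρ : Integrable ρ μ) (hδ : 0 < δ)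
    (hsupp : ∀ y, ρ y ≠ 0 → δ ≤ ‖x - y‖)
    (hint : Integrable (fun y => logKernel (x - y) * ρ y) μ) :
    HasFDerivAt (logPotential μ ρ) (innerSL ℝ (∫ y, ρ y • logKernelGrad (x - y) ∂μ)) x := by
  have hnear : ∀ x' ∈ Metric.ball x (δ / 2), ∀ y, ρ y ≠ 0 → δ / 2 ≤ ‖x' - y‖ := by
    intro x' hx' y hy
    have := norm_sub_le_norm_sub_add_norm_sub x x' y
    rw [← dist_eq_norm x x'] at this
    linarith [Metric.mem_ball'.1 hx', hsupp y hy]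
  have hgrad := integrable_smul_logKernelGrad_sub hρ hδ hsupp
  have h := hasFDerivAt_integral_of_dominated_of_fderiv_le (μ := μ)
    (F := fun x' y => logKernel (x' - y) * ρ y)
    (F' := fun x' y => innerSL ℝ (ρ y • logKernelGrad (x' - y)))
    (bound := fun y => 1 / (2 * π) / (δ / 2) * ‖ρ y‖)
    (Metric.ball_mem_nhds x (half_pos hδ))
    (Filter.Eventually.of_forall fun x' =>
      ((measurable_logKernel.comp (continuous_sub_left x').measurable).aestronglyMeasurable.mul
        hρ.aestronglyMeasurable))
    hint
    ((innerSL ℝ).continuous.comp_aestronglyMeasurable hgrad.aestronglyMeasurable)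
    (ae_of_all _ fun y x' hx' => ?_)
    (hρ.norm.const_mul _)
    (ae_of_all _ fun y x' hx' => ?_)
  · rwa [ContinuousLinearMap.integral_comp_commSL (by simp) _ hgrad] at h
  · rw [innerSL_apply_norm, norm_smul, mul_comm]
    rcases eq_or_ne (ρ y) 0 with hy | hy
    · simp [hy]
    exact mul_le_mul_of_nonneg_right (norm_logKernelGrad_le (half_pos hδ) (hnear x' hx' y hy))
      (norm_nonneg _)
  · rcases eq_or_ne (ρ y) 0 with hy | hy
    · simpa [hy] using hasFDerivAt_const 0 x'
    have hxy : x' - y ≠ 0 := norm_pos_iff.1 (by linarith [hnear x' hx' y hy])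
    refine (((hasFDerivAt_logKernel hxy).comp x' ((hasFDerivAt_id x').sub_const y)).mul_const
      (ρ y)).congr_fderiv ?_
    ext w
    simp

theorem integral_smul_logKernelGrad_sub_eq [CompleteSpace E] {ρ : E → ℝ} {x : E}
    (hρ : Integrable ρ μ) (hmom : Integrable (fun y => ρ y • y) μ)
    (hcom : ∫ y, ρ y • y ∂μ = 0) (hgrad : Integrable (fun y => ρ y • logKernelGrad (x - y)) μ) :
    ∫ y, ρ y • logKernelGrad (x - y) ∂μ - (∫ y, ρ y ∂μ) • logKernelGrad x =
      ∫ y, ρ y • (logKernelGrad (x - y) - logKernelGrad x + logKernelHess x y) ∂μ := by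
  have hhess_eq : (fun y => ρ y • logKernelHess x y) = fun y => logKernelHess x (ρ y • y) :=
    funext fun y => (map_smul _ _ _).symm
  have hhess_int : Integrable (fun y => ρ y • logKernelHess x y) μ := by
    rw [hhess_eq]; exact (logKernelHess x).integrable_comp hmom
  have hhess : ∫ y, ρ y • logKernelHess x y ∂μ = 0 := by
    rw [hhess_eq, ContinuousLinearMap.integral_comp_comm _ hmom, hcom, map_zero]
  simp_rw [smul_add, smul_sub]
  rw [integral_add (f := fun y => ρ y • logKernelGrad (x - y) - ρ y • logKernelGrad x)
      (hgrad.sub (hρ.smul_const _)) hhess_int, integral_sub hgrad (hρ.smul_const _),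
    integral_smul_const, hhess, add_zero]

theorem norm_integral_smul_logKernelGrad_remainder_le {ρ : E → ℝ} {x : E} {r : ℝ}
    (hρ : Integrable ρ μ) (hx : x ≠ 0) (hsupp : ∀ y, ρ y ≠ 0 → ‖y‖ ≤ r) (hr : 2 * r ≤ ‖x‖) :
    ‖∫ y, ρ y • (logKernelGrad (x - y) - logKernelGrad x + logKernelHess x y) ∂μ‖ ≤
      20 / π * (∫ y, ‖ρ y‖ ∂μ) * r ^ 2 / ‖x‖ ^ 3 := by
  have hbound : ∀ y, ‖ρ y • (logKernelGrad (x - y) - logKernelGrad x + logKernelHess x y)‖ ≤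
      ‖ρ y‖ * (20 / π * r ^ 2 / ‖x‖ ^ 3) := by
    intro y
    rw [norm_smul]
    rcases eq_or_ne (ρ y) 0 with hy | hy
    · simp [hy]
    have hyr := hsupp y hy
    have hy0 : 0 ≤ ‖y‖ := norm_nonneg y
    gcongr
    refine (norm_logKernelGrad_sub_sub_add_logKernelHess_le hx (by linarith)).trans ?_
    gcongr
  refine (norm_integral_le_of_norm_le (hρ.norm.mul_const _) (ae_of_all _ hbound)).trans_eq ?_
  rw [integral_mul_const]
  ring

theorem norm_fderiv_logPotential_sub_mul_logKernel_le [BorelSpace E] [CompleteSpace E]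
    [SecondCountableTopology E] {ρ : E → ℝ} {r : ℝ} {x : E} (hρ : Integrable ρ μ) (hr : 0 < r)
    (hsupp : Function.support ρ ⊆ Metric.ball 0 r) (hcom : ∫ y, ρ y • y ∂μ = 0)
    (hx : 2 * r ≤ ‖x‖) :
    ‖fderiv ℝ (fun z => logPotential μ ρ z - (∫ y, ρ y ∂μ) * logKernel z) x‖ ≤
      20 / π * (∫ y, ‖ρ y‖ ∂μ) * r ^ 2 / ‖x‖ ^ 3 := by
  have hy : ∀ y, ρ y ≠ 0 → ‖y‖ < r := fun y hy => mem_ball_zero_iff.1 (hsupp hy)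
  have hx0 : x ≠ 0 := norm_pos_iff.1 (by linarith)
  have hxy : ∀ y, ρ y ≠ 0 → r ≤ ‖x - y‖ ∧ ‖x - y‖ ≤ ‖x‖ + r := fun y h =>
    ⟨by linarith [norm_sub_norm_le x y, hy y h], by linarith [norm_sub_le x y, hy y h]⟩
  have hgrad := integrable_smul_logKernelGrad_sub hρ hr fun y h => (hxy y h).1
  have hmom : Integrable (fun y => ρ y • y) μ :=
    hρ.smul_of_norm_le_of_ne_zero aestronglyMeasurable_id fun y h => (hy y h).le
  have hderiv := (hasFDerivAt_logPotential hρ hr (fun y h => (hxy y h).1)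
    (integrable_logKernel_sub_mul hρ hr hxy)).fun_sub
    ((hasFDerivAt_logKernel hx0).const_mul (∫ y, ρ y ∂μ))
  have hsmul : (∫ y, ρ y ∂μ) • innerSL ℝ (logKernelGrad x) =
      innerSL ℝ ((∫ y, ρ y ∂μ) • logKernelGrad x) := by
    rw [map_smulₛₗ, conj_trivial]
  rw [hderiv.fderiv, hsmul, ← map_sub, innerSL_apply_norm,
    integral_smul_logKernelGrad_sub_eq hρ hmom hcom hgrad]
  exact norm_integral_smul_logKernelGrad_remainder_le hρ hx0 (fun y h => (hy y h).le) hx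

end LogPotential

theorem potential_gradient_decay_general (M r₀ : ℝ) (hr₀ : 0 < r₀)
    (ρ : E2 → ℝ) (hint : Integrable ρ)
    (hsupp : Function.support ρ ⊆ Metric.ball 0 r₀) (hmass : (∫ x, ρ x) = M)
    (hcom : (∫ x, ρ x • x) = (0 : E2))
    (u : E2 → ℝ)
    (hu : ∀ x, u x = ∫ y, (-(1 / (2 * π)) * Real.log (dist x y)) * ρ y) :
    ∃ C₂ > 0, ∀ x : E2, 2 * r₀ ≤ ‖x‖ →
      ‖fderiv ℝ (fun z => u z - M * (-(1 / (2 * π)) * Real.log ‖z‖)) x‖ ≤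
        C₂ * r₀ ^ 2 / ‖x‖ ^ 3 := by
  have hu' : u = logPotential volume ρ :=
    funext fun x => by simp only [hu, logPotential, logKernel, dist_eq_norm]
  subst hu' hmass
  refine ⟨20 / π * (∫ y, ‖ρ y‖) + 1, by positivity, fun x hx => ?_⟩
  refine (norm_fderiv_logPotential_sub_mul_logKernel_le hint hr₀ hsupp hcom hx).trans ?_
  gcongr
  linarith

theorem potential_gradient_decay (M r₀ : ℝ) (hr₀ : 0 < r₀)
    (ρ : E2 → ℝ) (hnn : ∀ x, 0 ≤ ρ x) (hint : Integrable ρ)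
    (hsupp : Function.support ρ ⊆ Metric.ball 0 r₀) (hmass : (∫ x, ρ x) = M)
    (hcom : (∫ x, ρ x • x) = (0 : E2))
    (u : E2 → ℝ)
    (hu : ∀ x, u x = ∫ y, (-(1 / (2 * π)) * Real.log (dist x y)) * ρ y) :
    ∃ C₂ > 0, ∀ x : E2, 2 * r₀ ≤ ‖x‖ →
      ‖fderiv ℝ (fun z => u z - M * (-(1 / (2 * π)) * Real.log ‖z‖)) x‖ ≤
        C₂ * r₀ ^ 2 / ‖x‖ ^ 3 :=
  potential_gradient_decay_general M r₀ hr₀ ρ hint hsupp hmass hcom u hu
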